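/- Consider the 4×4 symmetric matrix M(y) = [[1−y₁, 0, −y₃, −y₃], [0, −y₂, −y₁, 0], [−y₃, −y₁, −y₃, 0], [−y₃, 0, 0, 0]] for y ∈ ℝ³. If M(y) is positive semidefinite then y₃ = 0 and y₁ = 0; hence the supremum of y₁ over the feasible set is 0. -/

import Mathlib

/-!
A positive semidefinite matrix with a zero diagonal entry has a zero row: for the vector
`eⱼ + t eᵢ` the quadratic form is `Aⱼⱼ + 2 Aᵢⱼ t`, which is affine in `t` and so stays
nonnegative only if `Aᵢⱼ = 0`. Applied to `M(y)` this is a facial-reduction cascade: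
`M₃₃ = 0` kills `M₃₀ = -y₃`, which makes `M₂₂ = -y₃` vanish, which in turn kills `M₂₁ = -y₁`.
-/

namespace Matrix.PosSemidef

variable {n R : Type*} [Field R] [LinearOrder R] [IsStrictOrderedRing R] [StarRing R]
  [TrivialStar R] {A : Matrix n n R}

theorem apply_eq_zero_of_diag_eq_zero (hA : A.PosSemidef) {i : n} (hi : A i i = 0) (j : n) :
    A i j = 0 := by
  have hsymm : A j i = A i j := by simpa using hA.1.apply i j
  have hquad (t : R) : 0 ≤ 0 * (t * t) + 2 * A i j * t + A j j := by
    have := (hA.submatrix ![j, i]).dotProduct_mulVec_nonneg ![1, t]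
    simp only [dotProduct, mulVec, submatrix_apply, Fin.sum_univ_two, Pi.star_apply, star_trivial,
      cons_val_zero, cons_val_one, cons_val_fin_one, hsymm, hi, mul_one, one_mul, zero_mul,
      add_zero] at this
    linear_combination this
  have := discrim_le_zero hquad
  rw [discrim] at this
  nlinarith [sq_nonneg (A i j)]

end Matrix.PosSemidef

theorem counterexample_dual_eq_zero_of_posSemidef {y₁ y₂ y₃ : ℝ}
    (h : (!![1 - y₁, 0, -y₃, -y₃; 0, -y₂, -y₁, 0; -y₃, -y₁, -y₃, 0; -y₃, 0, 0, 0]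
      : Matrix (Fin 4) (Fin 4) ℝ).PosSemidef) : y₃ = 0 ∧ y₁ = 0 := by
  have hy₃ : y₃ = 0 := by simpa using h.apply_eq_zero_of_diag_eq_zero (i := 3) rfl 0
  have hy₁ : y₁ = 0 := by
    simpa using h.apply_eq_zero_of_diag_eq_zero (i := 2) (by simp [hy₃]) 1
  exact ⟨hy₃, hy₁⟩

/-- Dual of the singularity-degree-two counter-example: feasibility forces
`y₃ = 0` and `y₁ = 0`, hence the supremum of `y₁` is `0`. -/
theorem counterexample_dual :
    (∀ y₁ y₂ y₃ : ℝ,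
      (!![1 - y₁, 0, -y₃, -y₃; 0, -y₂, -y₁, 0; -y₃, -y₁, -y₃, 0; -y₃, 0, 0, 0]
        : Matrix (Fin 4) (Fin 4) ℝ).PosSemidef → y₃ = 0 ∧ y₁ = 0) ∧
    IsGreatest {v : ℝ | ∃ y₂ y₃ : ℝ,
      (!![1 - v, 0, -y₃, -y₃; 0, -y₂, -v, 0; -y₃, -v, -y₃, 0; -y₃, 0, 0, 0]
        : Matrix (Fin 4) (Fin 4) ℝ).PosSemidef} 0 := by
  refine ⟨fun _ _ _ => counterexample_dual_eq_zero_of_posSemidef, ⟨0, 0, ?_⟩,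
    fun _ ⟨_, _, h⟩ => (counterexample_dual_eq_zero_of_posSemidef h).2.le⟩
  have hdiag : (!![1 - 0, 0, -0, -0; 0, -0, -0, 0; -0, -0, -0, 0; -0, 0, 0, 0]
      : Matrix (Fin 4) (Fin 4) ℝ) = Matrix.diagonal ![1, 0, 0, 0] := by
    ext i j
    fin_cases i <;> fin_cases j <;> simp
  rw [hdiag, Matrix.posSemidef_diagonal_iff]
  intro i
  fin_cases i <;> simp
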